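/- arXiv:1610.08779 — 4 statements merged into one kernel-verified Lean document; each statement's English description precedes it below -/
import Mathlib

section
/- For σ > 0 and c ∈ ℝ, ∫_{0}^{∞} Δ² Φ((c−Δ)/σ) dΔ = (1/3)[(2σ³ + σc²) e^{−c²/(2σ²)}/√(2π) + (3cσ² + c³) Φ(c/σ)]. -/
open Real MeasureTheory Filter Topology

/-- The standard normal cumulative distribution function. -/
noncomputable def Phi (x : ℝ) : ℝ :=
  ∫ t in Set.Iic x, Real.exp (-t^2 / 2) / Real.sqrt (2 * π)

/-!
With `φ = Φ'` the standard normal density (`phi`) and `u = (c - Δ) / σ`, the function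
`H Δ = (Δ³ - c³ - 3σ²c)/3 · Φ(u) - σ/3 · (Δ² + cΔ + c² + 2σ²) · φ(u)`
is an antiderivative of `Δ² Φ(u)`; this is found by integrating by parts twice and using
`φ'(u) = -u φ(u)`. Since `0 ≤ Φ, φ ≤ exp`, every term of `H` is a polynomial times a function
decaying like `exp(-Δ/σ)`, so `H → 0` at `+∞` and the integral equals `-H 0`.
-/

noncomputable def phi (x : ℝ) : ℝ := Real.exp (-x^2 / 2) / Real.sqrt (2 * π)

lemma phi_nonneg (x : ℝ) : 0 ≤ phi x := by
  unfold phi; positivity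

lemma continuous_phi : Continuous phi := by
  unfold phi; fun_prop

lemma integrable_phi : Integrable phi := by
  have h : phi = fun x => Real.exp (-(1/2) * x^2) / Real.sqrt (2 * π) := by
    funext x; unfold phi; ring_nf
  rw [h]
  exact (integrable_exp_neg_mul_sq (by norm_num)).div_const _

lemma phi_le_exp (x : ℝ) : phi x ≤ Real.exp x := by
  unfold phi
  rw [div_le_iff₀ (by positivity)]
  have h_exp : Real.exp (-x^2/2) ≤ Real.exp x * Real.exp (1/2) := by
    rw [← Real.exp_add, Real.exp_le_exp]
    nlinarith [sq_nonneg (x + 1)]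
  have h_const : Real.exp (1/2) ≤ Real.sqrt (2 * π) := by
    rw [Real.le_sqrt (by positivity) (by positivity), ← Real.exp_nat_mul]
    norm_num
    nlinarith [Real.exp_one_lt_d9, Real.pi_gt_three]
  calc Real.exp (-x^2/2) ≤ Real.exp x * Real.exp (1/2) := h_exp
    _ ≤ Real.exp x * Real.sqrt (2 * π) := by gcongr

lemma Phi_eq_integral_phi (x : ℝ) : Phi x = ∫ t in Set.Iic x, phi t := rfl

lemma Phi_nonneg (x : ℝ) : 0 ≤ Phi x :=
  integral_nonneg phi_nonneg

lemma Phi_le_exp (x : ℝ) : Phi x ≤ Real.exp x :=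
  calc Phi x ≤ ∫ t in Set.Iic x, Real.exp t :=
        setIntegral_mono_on integrable_phi.integrableOn (integrableOn_exp_Iic x)
          measurableSet_Iic fun t _ => phi_le_exp t
    _ = Real.exp x := integral_exp_Iic x

lemma hasDerivAt_Phi (x : ℝ) : HasDerivAt Phi (phi x) x := by
  have h_split : Phi = fun y => (∫ t in (0:ℝ)..y, phi t) + Phi 0 := by
    funext y
    rw [Phi_eq_integral_phi, Phi_eq_integral_phi, ← intervalIntegral.integral_Iic_sub_Iic
      integrable_phi.integrableOn integrable_phi.integrableOn]
    ring
  rw [h_split]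
  exact (intervalIntegral.integral_hasDerivAt_right integrable_phi.intervalIntegrable
    continuous_phi.stronglyMeasurable.stronglyMeasurableAtFilter
    continuous_phi.continuousAt).add_const _

lemma hasDerivAt_phi (x : ℝ) : HasDerivAt phi (-x * phi x) x :=
  ((((hasDerivAt_pow 2 x).neg.div_const 2).exp).div_const _).congr_deriv (by simp only [phi, Pi.neg_apply]; ring)

lemma tendsto_pow_mul_comp_of_le_exp {f : ℝ → ℝ} (hf_nonneg : ∀ x, 0 ≤ f x)
    (hf_le : ∀ x, f x ≤ Real.exp x) {σ : ℝ} (hσ : 0 < σ) (c : ℝ) (k : ℕ) :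
    Tendsto (fun Δ => Δ^k * f ((c - Δ) / σ)) atTop (𝓝 0) := by
  have h_exp : Tendsto (fun Δ => Δ^k * Real.exp ((c - Δ) / σ)) atTop (𝓝 0) := by
    have h := ((tendsto_pow_mul_exp_neg_atTop_nhds_zero k).comp
      (tendsto_id.atTop_div_const hσ)).const_mul (σ^k * Real.exp (c/σ))
    rw [mul_zero] at h
    refine h.congr fun Δ => ?_
    rw [Function.comp_apply, id, sub_div, Real.exp_sub, Real.exp_neg, div_pow]
    field_simp
  refine squeeze_zero' ?_ ?_ h_exp <;> filter_upwards [eventually_ge_atTop 0] with Δ hΔ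
  · exact mul_nonneg (pow_nonneg hΔ k) (hf_nonneg _)
  · exact mul_le_mul_of_nonneg_left (hf_le _) (pow_nonneg hΔ k)

noncomputable def sqMulPhiAntideriv (σ c Δ : ℝ) : ℝ :=
  (Δ^3 - c^3 - 3*σ^2*c)/3 * Phi ((c - Δ)/σ)
    - σ/3 * (Δ^2 + c*Δ + c^2 + 2*σ^2) * phi ((c - Δ)/σ)

lemma hasDerivAt_sqMulPhiAntideriv {σ : ℝ} (hσ : σ ≠ 0) (c Δ : ℝ) :
    HasDerivAt (sqMulPhiAntideriv σ c) (Δ^2 * Phi ((c - Δ)/σ)) Δ := by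
  have hu : HasDerivAt (fun Δ : ℝ => (c - Δ)/σ) (-1/σ) Δ := by
    simpa using ((hasDerivAt_id Δ).const_sub c).div_const σ
  have hPhi := (hasDerivAt_Phi _).comp Δ hu
  have hphi := (hasDerivAt_phi _).comp Δ hu
  have hP : HasDerivAt (fun Δ : ℝ => (Δ^3 - c^3 - 3*σ^2*c)/3) (Δ^2) Δ :=
    (((hasDerivAt_pow 3 Δ).sub_const _).sub_const _).div_const 3 |>.congr_deriv (by ring)
  have hQ : HasDerivAt (fun Δ : ℝ => σ/3 * (Δ^2 + c*Δ + c^2 + 2*σ^2)) (σ/3 * (2*Δ + c)) Δ :=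
    ((((hasDerivAt_pow 2 Δ).add ((hasDerivAt_id Δ).const_mul c)).add_const _).add_const _
      |>.const_mul _).congr_deriv (by simp)
  refine ((hP.mul hPhi).sub (hQ.mul hphi)).congr_deriv ?_
  simp only [Function.comp_def]
  field_simp
  ring

lemma tendsto_sqMulPhiAntideriv_atTop {σ : ℝ} (hσ : 0 < σ) (c : ℝ) :
    Tendsto (sqMulPhiAntideriv σ c) atTop (𝓝 0) := by
  have hΦ := tendsto_pow_mul_comp_of_le_exp Phi_nonneg Phi_le_exp hσ c
  have hφ := tendsto_pow_mul_comp_of_le_exp phi_nonneg phi_le_exp hσ c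
  have h := ((hΦ 3).const_mul (1/3)).sub ((hΦ 0).const_mul ((c^3 + 3*σ^2*c)/3))
    |>.sub ((hφ 2).const_mul (σ/3)) |>.sub ((hφ 1).const_mul (σ*c/3))
    |>.sub ((hφ 0).const_mul (σ*(c^2 + 2*σ^2)/3))
  simp only [mul_zero, sub_zero] at h
  refine h.congr fun Δ => ?_
  simp only [sqMulPhiAntideriv, pow_zero, pow_one]
  ring

theorem integral_sq_mul_Phi (σ c : ℝ) (hσ : 0 < σ) :
    (∫ Δ in Set.Ici (0:ℝ), Δ^2 * Phi ((c - Δ) / σ))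
      = (1/3) * ((2 * σ^3 + σ * c^2) * Real.exp (-c^2 / (2 * σ^2)) / Real.sqrt (2 * π)
          + (3 * c * σ^2 + c^3) * Phi (c / σ)) := by
  rw [integral_Ici_eq_integral_Ioi, integral_Ioi_of_hasDerivAt_of_nonneg'
    (fun Δ _ => hasDerivAt_sqMulPhiAntideriv hσ.ne' c Δ)
    (fun Δ _ => mul_nonneg (sq_nonneg Δ) (Phi_nonneg _))
    (tendsto_sqMulPhiAntideriv_atTop hσ c)]
  simp only [sqMulPhiAntideriv, phi, sub_zero]
  rw [div_pow, neg_div, neg_div, div_div, mul_comm (σ^2)]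
  ring
end

section
/- Let π be a discrete probability distribution on ℝ with support {x+a, x+b} where a > 0, b > a, with π(x+a) = 1/(r+1) and π(x+b) = r/(r+1), r > e. Let θ̂ be the posterior mean after observing x with normal error of standard deviation σ, i.e. θ̂ = (a e^{−a²/(2σ²)}/(r+1) + rb e^{−b²/(2σ²)}/(r+1)) / (e^{−a²/(2σ²)}/(r+1) + r e^{−b²/(2σ²)}/(r+1)). Then |θ̂ − x| ≤ a + σ√(2 log r). -/
open Real

set_option maxHeartbeats 1000000

/-- For a two-point prior at `x + a` and `x + b` with weights `1/(r+1)` and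
`r/(r+1)` (with `0 < a < b`, `r > e`), the posterior mean `θ̂` under a Gaussian
likelihood with standard deviation `σ` satisfies `|θ̂ - x| ≤ a + σ √(2 log r)`. -/
theorem two_point_posterior_mean_bound (x a b σ r : ℝ)
    (ha : 0 < a) (hab : a < b) (hσ : 0 < σ) (hr : Real.exp 1 < r) :
    |(((x + a) * (Real.exp (-a^2 / (2 * σ^2)) / (r + 1))
        + (x + b) * (r * Real.exp (-b^2 / (2 * σ^2)) / (r + 1))) /
      ((Real.exp (-a^2 / (2 * σ^2)) / (r + 1))
        + (r * Real.exp (-b^2 / (2 * σ^2)) / (r + 1))) - x)|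
      ≤ a + σ * Real.sqrt (2 * Real.log r) := by
  have hr0 : (0:ℝ) < r := lt_trans (Real.exp_pos 1) hr
  have hr1 : (0:ℝ) < r + 1 := by linarith
  have hlog : 1 < Real.log r := (Real.lt_log_iff_exp_lt hr0).2 hr
  set s := σ * Real.sqrt (2 * Real.log r) with hs
  have hsq : Real.sqrt (2 * Real.log r) ^ 2 = 2 * Real.log r :=
    Real.sq_sqrt (by linarith)
  have hs2 : s^2 = σ^2 * (2 * Real.log r) := by
    rw [hs, mul_pow, hsq]
  have hσs : σ ≤ s := by
    have h1 : 1 ≤ Real.sqrt (2 * Real.log r) := by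
      rw [show (1:ℝ) = Real.sqrt 1 by simp]
      exact Real.sqrt_le_sqrt (by linarith)
    nlinarith
  have hs0 : 0 < s := lt_of_lt_of_le hσ hσs
  set E1 := Real.exp (-a^2 / (2*σ^2)) with hE1
  set E2 := Real.exp (-b^2 / (2*σ^2)) with hE2
  have hE1p : 0 < E1 := Real.exp_pos _
  have hE2p : 0 < E2 := Real.exp_pos _
  have hσ2 : (0:ℝ) < σ^2 := by positivity
  have hkey : (b - a - s) * (r * E2) ≤ s * E1 := by
    rcases le_or_gt b (a + s) with h | h
    · have h1 : (b - a - s) * (r * E2) ≤ 0 :=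
        mul_nonpos_of_nonpos_of_nonneg (by linarith) (by positivity)
      nlinarith
    · set t := b - a - s with ht
      have ht0 : 0 < t := by rw [ht]; linarith
      set u := (b^2 - a^2 - s^2) / (2*σ^2) with hu
      have hust : s * t / σ^2 ≤ u := by
        rw [hu, div_le_div_iff₀ (by positivity) (by positivity)]
        have hb : b = a + s + t := by rw [ht]; ring
        have hexp : (b ^ 2 - a ^ 2 - s ^ 2) * σ ^ 2 - s * t * (2 * σ ^ 2)
            = (2*a*s + 2*a*t + t^2) * σ ^ 2 := by rw [hb]; ring
        nlinarith [mul_pos ha hs0, mul_pos ha ht0, sq_nonneg t,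
          mul_nonneg (by nlinarith [mul_pos ha hs0, mul_pos ha ht0, sq_nonneg t] :
            (0:ℝ) ≤ 2*a*s + 2*a*t + t^2) hσ2.le]
      have hu0 : 0 < u := lt_of_lt_of_le (by positivity) hust
      have hexpu : u < Real.exp u := by
        have := Real.add_one_le_exp u
        linarith
      have hexp_neg : Real.exp (-u) ≤ u⁻¹ := by
        rw [Real.exp_neg]
        exact inv_anti₀ hu0 (le_of_lt hexpu)
      have h2 : s * t ≤ u * σ^2 := by
        have := (div_le_iff₀ hσ2).1 hust
        linarith
      have h3 : t ≤ s * u := by nlinarith [mul_pos hu0 hσ2]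
      have h4 : t * Real.exp (-u) ≤ s := by
        calc t * Real.exp (-u) ≤ t * u⁻¹ := by
              exact mul_le_mul_of_nonneg_left hexp_neg (le_of_lt ht0)
          _ ≤ s := by
              rw [← div_eq_mul_inv, div_le_iff₀ hu0]
              linarith
      have hlogr : Real.log r = s^2 / (2*σ^2) := by
        rw [hs2]; field_simp
      have hrE2 : r * E2 = Real.exp (-u) * E1 := by
        rw [hE2, hE1, ← Real.exp_log hr0, ← Real.exp_add, ← Real.exp_add]
        congr 1
        rw [hlogr, hu]
        field_simp
        ring
      calc t * (r * E2) = (t * Real.exp (-u)) * E1 := by rw [hrE2]; ring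
        _ ≤ s * E1 := mul_le_mul_of_nonneg_right h4 (le_of_lt hE1p)
  -- now rewrite the main expression
  have hD : (0:ℝ) < E1 / (r+1) + r * E2 / (r+1) := by positivity
  have hQ : ((x + a) * (E1 / (r + 1)) + (x + b) * (r * E2 / (r + 1))) /
      (E1 / (r + 1) + r * E2 / (r + 1)) - x
      = (a * E1 + b * (r * E2)) / (E1 + r * E2) := by
    have hne : E1 + r * E2 ≠ 0 := by positivity
    have hne1 : (r:ℝ) + 1 ≠ 0 := ne_of_gt hr1
    have hDne : E1 / (r + 1) + r * E2 / (r + 1) ≠ 0 := ne_of_gt hD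
    field_simp
    ring
  rw [hQ]
  clear hQ hD
  have hb0 : 0 < b := ha.trans hab
  have hQpos : 0 ≤ (a * E1 + b * (r * E2)) / (E1 + r * E2) :=
    div_nonneg (by nlinarith [mul_pos ha hE1p, mul_pos hb0 (mul_pos hr0 hE2p)])
      (by positivity)
  rw [abs_of_nonneg hQpos, div_le_iff₀ (by positivity)]
  nlinarith [hkey, mul_pos hE1p hs0]
end

section
/- For r > e, v ≥ 0, and w > 0, the quantity rw/(r + e^{(w² + 2vw)/2}) is at most √(2 log r). -/
open Real

theorem rw_ratio_le_sqrt_two_log (r v w : ℝ)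
    (hr : Real.exp 1 < r) (hv : 0 ≤ v) (hw : 0 < w) :
    r * w / (r + Real.exp ((w^2 + 2 * v * w) / 2)) ≤ Real.sqrt (2 * Real.log r) := by
  have hr0 : (0:ℝ) < r := lt_trans (Real.exp_pos 1) hr
  have hlog : 1 < Real.log r := (Real.lt_log_iff_exp_lt hr0).2 hr
  set E := Real.exp ((w^2 + 2 * v * w) / 2) with hE
  have hEpos : 0 < E := Real.exp_pos _
  have hD : 0 < r + E := by linarith
  set s := Real.sqrt (2 * Real.log r) with hs
  have hs0 : 0 < s := Real.sqrt_pos.2 (by linarith)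
  have hs2 : s^2 = 2 * Real.log r := Real.sq_sqrt (by linarith)
  rw [div_le_iff₀ hD]
  rcases le_or_gt w s with h | h
  · nlinarith [mul_nonneg hw.le hEpos.le, mul_pos hr0 hw]
  · -- w > s
    have hE1 : Real.exp (w^2 / 2) ≤ E := by
      apply Real.exp_le_exp.2
      nlinarith [mul_nonneg hv hw.le]
    have hexpr : Real.exp (s^2 / 2) = r := by
      rw [hs2]; rw [show (2 * Real.log r) / 2 = Real.log r by ring]
      exact Real.exp_log hr0
    have hE2 : r * (1 + (w^2 - s^2) / 2) ≤ Real.exp (w^2 / 2) := by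
      have h1 : (w^2 - s^2) / 2 + 1 ≤ Real.exp ((w^2 - s^2) / 2) :=
        Real.add_one_le_exp _
      have h2 : Real.exp (w^2 / 2) = r * Real.exp ((w^2 - s^2) / 2) := by
        rw [← hexpr, ← Real.exp_add]; ring_nf
      rw [h2]
      nlinarith
    have hs2gt : 2 < s^2 := by nlinarith
    nlinarith [mul_pos hr0 hs0, mul_pos (mul_pos hr0 hs0) (sub_pos.2 h),
      mul_nonneg (mul_pos hr0 hs0).le (sq_nonneg (w - s))]
end

section
/- Let X follow an exponential distribution with rate λ > 0 and define g(λ) = E[1/(1+X)²] = ∫_0^∞ λ e^{−λx}/(1+x)² dx. Then g is differentiable and g'(λ) = (1 + 2/λ) g(λ) − 1. -/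
open Real MeasureTheory

open Set Filter Metric Topology

/-!
With `A(λ) = ∫₀^∞ e^{-λx}/(1+x)²` and `B(λ) = ∫₀^∞ e^{-λx}/(1+x)` we have `g = λ A`.
Differentiating under the integral sign (near `λ` the `λ`-derivative is dominated by
`x e^{-λx/2}`) and using `x/(1+x)² = 1/(1+x) - 1/(1+x)²` gives `A' = A - B`, while integrating
the derivative of `-e^{-λx}/(1+x)` over `(0, ∞)` gives `λ B + A = 1`. Hence
`g' = A + λ (A - B) = (2 + λ) A - 1 = (1 + 2/λ) g - 1`.
-/

section LaplaceIoi

variable {f : ℝ → ℝ} {C : ℝ}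

theorem integrableOn_mul_exp_neg_mul {b : ℝ} (hb : 0 < b) :
    IntegrableOn (fun x : ℝ => x * exp (-b * x)) (Ioi 0) := by
  refine (integrableOn_rpow_mul_exp_neg_mul_rpow (s := 1) (p := 1) (by norm_num) one_pos
    hb).congr_fun (fun x _ => ?_) measurableSet_Ioi
  simp only [rpow_one]

theorem integrableOn_exp_neg_mul_mul {b : ℝ} (hb : 0 < b)
    (hf : AEStronglyMeasurable f (volume.restrict (Ioi 0)))
    (hfC : ∀ᵐ x ∂volume.restrict (Ioi 0), ‖f x‖ ≤ C) :
    IntegrableOn (fun x => exp (-b * x) * f x) (Ioi 0) :=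
  (exp_neg_integrableOn_Ioi 0 hb).mul_bdd hf hfC

theorem norm_mul_exp_neg_mul_le {x l b : ℝ} (hx : 0 ≤ x) (hbl : b ≤ l) :
    ‖x * exp (-l * x)‖ ≤ x * exp (-b * x) := by
  rw [Real.norm_eq_abs, abs_of_nonneg (by positivity)]
  gcongr

theorem hasDerivAt_integral_exp_neg_mul_mul {l : ℝ} (hl : 0 < l)
    (hf : AEStronglyMeasurable f (volume.restrict (Ioi 0)))
    (hfC : ∀ᵐ x ∂volume.restrict (Ioi 0), ‖f x‖ ≤ C) :
    HasDerivAt (fun l => ∫ x in Ioi 0, exp (-l * x) * f x)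
      (∫ x in Ioi 0, -x * exp (-l * x) * f x) l := by
  refine (hasDerivAt_integral_of_dominated_loc_of_deriv_le (ball_mem_nhds l (half_pos hl))
    (μ := volume.restrict (Ioi 0)) (F := fun k x => exp (-k * x) * f x)
    (F' := fun k x => -x * exp (-k * x) * f x) (bound := fun x => x * exp (-(l / 2) * x) * C)
    (Eventually.of_forall fun k => ?_) (integrableOn_exp_neg_mul_mul hl hf hfC) ?_ ?_
    ((integrableOn_mul_exp_neg_mul (half_pos hl)).mul_const C) ?_).2
  · exact (by fun_prop : Continuous fun x => exp (-k * x)).aestronglyMeasurable.mul hf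
  · exact (by fun_prop : Continuous fun x => -x * exp (-l * x)).aestronglyMeasurable.mul hf
  · filter_upwards [hfC, ae_restrict_mem measurableSet_Ioi] with x hfx (hx : 0 < x) k hk
    have hkl : l / 2 ≤ k := by
      rw [mem_ball, Real.dist_eq, abs_lt] at hk; linarith
    rw [norm_mul, neg_mul, norm_neg]
    have hx₀ : 0 ≤ x := hx.le
    exact mul_le_mul (norm_mul_exp_neg_mul_le hx₀ hkl) hfx (norm_nonneg _) (by positivity)
  · refine Eventually.of_forall fun x k _ => ?_
    have : HasDerivAt (fun k => exp (-k * x)) (-x * exp (-k * x)) k := by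
      simpa [mul_comm] using ((hasDerivAt_neg k).mul_const x).exp
    exact this.mul_const (f x)

end LaplaceIoi

theorem ae_norm_inv_one_add_pow_le_one (n : ℕ) :
    ∀ᵐ x ∂volume.restrict (Ioi (0 : ℝ)), ‖((1 + x) ^ n)⁻¹‖ ≤ 1 := by
  filter_upwards [ae_restrict_mem measurableSet_Ioi] with x (hx : 0 < x)
  rw [norm_inv, norm_pow, Real.norm_of_nonneg (by linarith)]
  exact inv_le_one_of_one_le₀ (one_le_pow₀ (by linarith))

theorem aestronglyMeasurable_inv_one_add_pow (n : ℕ) :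
    AEStronglyMeasurable (fun x : ℝ => ((1 + x) ^ n)⁻¹) (volume.restrict (Ioi 0)) :=
  (by fun_prop : Measurable fun x : ℝ => ((1 + x) ^ n)⁻¹).aestronglyMeasurable

theorem integrableOn_exp_neg_mul_div_one_add_pow {b : ℝ} (hb : 0 < b) (n : ℕ) :
    IntegrableOn (fun x => exp (-b * x) / (1 + x) ^ n) (Ioi 0) := by
  simpa only [div_eq_mul_inv] using integrableOn_exp_neg_mul_mul hb
    (aestronglyMeasurable_inv_one_add_pow n) (ae_norm_inv_one_add_pow_le_one n)

theorem mul_integral_exp_neg_mul_div_one_add_add_integral_sq_eq_one {b : ℝ} (hb : 0 < b) :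
    b * (∫ x in Ioi 0, exp (-b * x) / (1 + x)) + ∫ x in Ioi 0, exp (-b * x) / (1 + x) ^ 2 = 1 := by
  have hint₁ := integrableOn_exp_neg_mul_div_one_add_pow hb 1
  have hint₂ := integrableOn_exp_neg_mul_div_one_add_pow hb 2
  simp only [pow_one] at hint₁
  rw [← integral_const_mul, ← integral_add (hint₁.const_mul b) hint₂]
  have hderiv : ∀ x ∈ Ici (0 : ℝ), HasDerivAt (fun x => -exp (-b * x) / (1 + x))
      (b * (exp (-b * x) / (1 + x)) + exp (-b * x) / (1 + x) ^ 2) x := by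
    intro x (hx : 0 ≤ x)
    have hexp : HasDerivAt (fun x => -exp (-b * x)) (b * exp (-b * x)) x :=
      ((hasDerivAt_id' x).const_mul (-b)).exp.fun_neg.congr_deriv (by ring)
    refine (hexp.fun_div ((hasDerivAt_id' x).const_add 1) (by positivity)).congr_deriv ?_
    field_simp
    ring
  have hlim : Tendsto (fun x => -exp (-b * x) / (1 + x)) atTop (𝓝 0) := by
    have hexp : Tendsto (fun x => -exp (-b * x)) atTop (𝓝 0) := by
      simpa using
        (tendsto_exp_atBot.comp (tendsto_id.const_mul_atTop_of_neg (neg_lt_zero.2 hb))).neg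
    exact hexp.div_atTop (tendsto_atTop_add_const_left _ 1 tendsto_id)
  rw [integral_Ioi_of_hasDerivAt_of_tendsto' hderiv ((hint₁.const_mul b).add hint₂) hlim]
  simp

theorem hasDerivAt_integral_exp_neg_mul_div_one_add_sq {l : ℝ} (hl : 0 < l) :
    HasDerivAt (fun l => ∫ x in Ioi 0, exp (-l * x) / (1 + x) ^ 2)
      ((∫ x in Ioi 0, exp (-l * x) / (1 + x) ^ 2) - ∫ x in Ioi 0, exp (-l * x) / (1 + x)) l := by
  have h := hasDerivAt_integral_exp_neg_mul_mul hl
    (aestronglyMeasurable_inv_one_add_pow 2) (ae_norm_inv_one_add_pow_le_one 2)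
  simp only [← div_eq_mul_inv] at h
  have hint₁ := integrableOn_exp_neg_mul_div_one_add_pow hl 1
  have hint₂ := integrableOn_exp_neg_mul_div_one_add_pow hl 2
  simp only [pow_one] at hint₁
  rw [← integral_sub hint₂ hint₁]
  convert h using 1
  refine setIntegral_congr_fun measurableSet_Ioi fun x (hx : 0 < x) => ?_
  have : 1 + x ≠ 0 := by positivity
  field_simp
  ring

theorem exp_inv_sq_deriv (lam : ℝ) (hlam : 0 < lam) :
    HasDerivAt (fun l : ℝ => ∫ x in Set.Ioi (0:ℝ), l * Real.exp (-l * x) / (1 + x)^2)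
      ((1 + 2 / lam) * (∫ x in Set.Ioi (0:ℝ), lam * Real.exp (-lam * x) / (1 + x)^2) - 1)
      lam := by
  simp only [mul_div_assoc, integral_const_mul]
  refine ((hasDerivAt_id' lam).mul
    (hasDerivAt_integral_exp_neg_mul_div_one_add_sq hlam)).congr_deriv ?_
  have hIBP := mul_integral_exp_neg_mul_div_one_add_add_integral_sq_eq_one hlam
  set A := ∫ x in Ioi 0, exp (-lam * x) / (1 + x) ^ 2
  set B := ∫ x in Ioi 0, exp (-lam * x) / (1 + x)
  field_simp
  linarith
end
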